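/- Let A be a generalised Poisson affine space over a field k of characteristic zero. Then every Casimir of Frac(A) is a quotient of two homogeneous elements of A of the same weight: Cas(Frac(A)) = ⋃_{λ∈Λ} {ab⁻¹ : a, b ∈ A_λ, b ≠ 0}. -/

import Mathlib

/-!
If `q` is a Casimir of `Frac(A)`, the denominator ideal `I = {b ∈ A | b q ∈ A}` is nonzero and,
because `{d, b q} = q {d, b}`, stable under every Hamiltonian derivation `{d, ·}`. Such an ideal
contains a nonzero homogeneous element: write `b ∈ I` as a sum of homogeneous components of
distinct weights `ω`; if two weights differ they differ at some generator `x i`, and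
`{x i, b} - ω₀ (x i) b ∈ I` has components `(ω (x i) - ω₀ (x i)) b_ω`, one fewer of them. The
"eigenvalues" `ω (x i)` lie in `A`, not in `k`, but by the Jacobi identity and the commutation of
the weight derivations they are homogeneous of weight `l i`, so the new components are again
homogeneous, of the pairwise distinct weights `l i + ω`. For a homogeneous `c ∈ I` of weight `ω`,
`a = c q` has weight `ω` too, and `q = a c⁻¹`. Conversely a quotient of two elements of the same
weight brackets to zero with `A`, hence with `Frac(A)`.
-/

/-- A Poisson bracket on a commutative `k`-algebra `A`: a `k`-bilinear Lie bracket
satisfying the Leibniz rule. -/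
structure IsPoissonBracket (k : Type*) (A : Type*) [CommRing k] [CommRing A] [Algebra k A]
    (P : A → A → A) : Prop where
  add_left : ∀ a b c : A, P (a + b) c = P a c + P b c
  smul_left : ∀ (r : k) (a b : A), P (r • a) b = r • P a b
  lie_skew : ∀ a b : A, P a b = - P b a
  jacobi : ∀ a b c : A, P a (P b c) + P b (P c a) + P c (P a b) = 0
  leibniz : ∀ a b c : A, P (a * b) c = a * P b c + b * P a c

theorem AddSubmonoid.exists_eq_sum_apply_of_mem_closure_range {ι X M : Type*} [Fintype ι]
    [AddCommMonoid M] {l : ι → X → M} {ω : X → M} (hω : ω ∈ closure (Set.range l)) :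
    ∃ cf : ι → ℕ, ω = fun d => ∑ i, cf i • l i d := by
  obtain ⟨cf, rfl⟩ := mem_closure_range_iff_of_fintype.mp hω
  exact ⟨cf, funext fun d => by simp only [Finset.sum_apply, Pi.smul_apply]⟩

theorem Submodule.colon_one_singleton_ne_bot {A K : Type*} [CommRing A] [Nontrivial A] [Field K]
    [Algebra A K] [IsFractionRing A K] (q : K) : (1 : Submodule A K).colon {q} ≠ ⊥ := by
  obtain ⟨a, b, hb, rfl⟩ := IsFractionRing.div_surjective A q
  refine (Submodule.ne_bot_iff _).mpr ⟨b, ?_, nonZeroDivisors.ne_zero hb⟩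
  rw [mem_colon_singleton, mem_one, Algebra.smul_def,
    mul_div_cancel₀ _ (IsFractionRing.to_map_ne_zero_of_mem_nonZeroDivisors hb)]
  exact ⟨a, rfl⟩

namespace IsPoissonBracket

section Bracket

variable {k R : Type*} [CommRing k] [CommRing R] [Algebra k R] {P : R → R → R}
  (hP : IsPoissonBracket k R P)
include hP

theorem add_right (a b c : R) : P a (b + c) = P a b + P a c := by
  rw [hP.lie_skew, hP.add_left, neg_add, ← hP.lie_skew, ← hP.lie_skew]

theorem smul_right (r : k) (a b : R) : P a (r • b) = r • P a b := by
  rw [hP.lie_skew, hP.smul_left, hP.lie_skew a b, smul_neg]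

theorem mul_right (a b c : R) : P a (b * c) = b * P a c + c * P a b := by
  rw [hP.lie_skew, hP.leibniz, hP.lie_skew a c, hP.lie_skew a b]
  ring

def hamiltonian (d : R) : Derivation k R R :=
  Derivation.mk' ⟨⟨P d, hP.add_right d⟩, fun r a => hP.smul_right r d a⟩ (hP.mul_right d)

@[simp]
theorem hamiltonian_apply (d a : R) : hP.hamiltonian d a = P d a := rfl

theorem zero_right (a : R) : P a 0 = 0 :=
  map_zero (hP.hamiltonian a)

end Bracket

section FractionField

variable {k A K : Type*} [CommRing k] [CommRing A] [Field K] [Algebra A K] [IsFractionRing A K]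
  [Algebra k K] {Q : K → K → K} (hQ : IsPoissonBracket k K Q)
include hQ

theorem eq_zero_of_forall_algebraMap_left {q : K} (h : ∀ a : A, Q (algebraMap A K a) q = 0)
    (c : K) : Q c q = 0 := by
  obtain ⟨r, s, -, rfl⟩ := IsFractionRing.div_surjective A c
  rw [hQ.lie_skew, ← hamiltonian_apply hQ, Derivation.leibniz_div]
  simp only [hamiltonian_apply, hQ.lie_skew q, h, neg_zero, smul_zero, sub_zero]

end FractionField

section WeightSpace

variable {k A : Type*} [CommRing k] [CommRing A] [Algebra k A] {P : A → A → A}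
  (hP : IsPoissonBracket k A P)

def weightSpace (ω : A → A) : Submodule k A where
  carrier := {a | ∀ d, P d a = ω d * a}
  add_mem' {a b} ha hb d := by rw [hP.add_right, ha, hb, mul_add]
  zero_mem' d := by rw [hP.zero_right, mul_zero]
  smul_mem' r a ha d := by rw [hP.smul_right, ha, mul_smul_comm]

theorem one_mem_weightSpace_zero : (1 : A) ∈ hP.weightSpace 0 := fun d => by
  rw [← hamiltonian_apply hP, Derivation.map_one_eq_zero, Pi.zero_apply, zero_mul]

theorem mul_mem_weightSpace {ω ω' : A → A} {a b : A} (ha : a ∈ hP.weightSpace ω)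
    (hb : b ∈ hP.weightSpace ω') : a * b ∈ hP.weightSpace (ω + ω') := fun d => by
  rw [hP.mul_right, ha, hb, Pi.add_apply]
  ring

variable [IsDomain A] {y z : A} {δ ε : A → A}

def normalDerivation (hy : ∀ b, P b y = δ b * y) (hy0 : y ≠ 0) : Derivation k A A :=
  Derivation.mk'
    { toFun := δ
      map_add' a b := mul_right_cancel₀ hy0 <| by rw [← hy, hP.add_left, hy, hy, add_mul]
      map_smul' r a := mul_right_cancel₀ hy0 <| by
        rw [← hy, hP.smul_left, hy, RingHom.id_apply, smul_mul_assoc] }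
    fun a b => mul_right_cancel₀ hy0 <| by
      simp only [LinearMap.coe_mk, AddHom.coe_mk, smul_eq_mul]
      rw [← hy, hP.leibniz, hy, hy]
      ring

/-- The Jacobi identity for `y`, `z`, `d`, in which the commutation of `δ` and `ε` cancels the
second-order terms. -/
theorem apply_mem_weightSpace_of_normal (hy : ∀ b, P b y = δ b * y)
    (hz : ∀ b, P b z = ε b * z) (hz0 : z ≠ 0) (hcomm : ∀ a, δ (ε a) = ε (δ a)) :
    ε y ∈ hP.weightSpace δ := fun d => by
  have hyz : δ z * y = -(ε y * z) := by rw [← hy, hP.lie_skew, hz]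
  have hneg : ∀ a b, P a (-b) = -P a b := fun a => map_neg (hP.hamiltonian a)
  have hjac := hP.jacobi y z d
  rw [hP.lie_skew z d, hz, hneg, hP.mul_right, hy d, hP.mul_right, hz y, hP.mul_right,
    hP.lie_skew y (ε d), hy, hP.lie_skew z (δ d), hz, hy z, hz d, hcomm] at hjac
  refine mul_left_cancel₀ hz0 ?_
  linear_combination hjac - δ d * hyz

end WeightSpace

section AffineSpace

variable {k A : Type*} [CommRing k] [CommRing A] [Algebra k A] {P : A → A → A}
  (hP : IsPoissonBracket k A P) {n : ℕ} {x : Fin n → A} {l : Fin n → A → A}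
  (hx : ∀ (i : Fin n) (b : A), P b (x i) = l i b * x i) (hxne : ∀ i : Fin n, x i ≠ 0)
  (hcomm : ∀ (i j : Fin n) (a : A), l i (l j a) = l j (l i a))
  (hgen : Algebra.adjoin k (Set.range x) = ⊤)

include hx hgen in
theorem iSup_weightSpace_eq_top :
    ⨆ ω : AddSubmonoid.closure (Set.range l), hP.weightSpace ω = ⊤ := by
  let homogeneous : Submonoid A :=
    { carrier := {a | ∃ ω ∈ AddSubmonoid.closure (Set.range l), a ∈ hP.weightSpace ω}
      one_mem' := ⟨0, zero_mem _, hP.one_mem_weightSpace_zero⟩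
      mul_mem' := by
        rintro _ _ ⟨ω, hω, ha⟩ ⟨ω', hω', hb⟩
        exact ⟨ω + ω', add_mem hω hω', hP.mul_mem_weightSpace ha hb⟩ }
  have hle : Submonoid.closure (Set.range x) ≤ homogeneous :=
    Submonoid.closure_le.mpr <| by
      rintro _ ⟨i, rfl⟩
      exact ⟨l i, AddSubmonoid.subset_closure ⟨i, rfl⟩, hx i⟩
  rw [eq_top_iff, ← Algebra.top_toSubmodule, ← hgen, Algebra.adjoin_eq_span, Submodule.span_le]
  intro a ha
  obtain ⟨ω, hω, ha⟩ := hle ha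
  exact Submodule.mem_iSup_of_mem ⟨ω, hω⟩ ha

structure IsWeightDecomposition {ι : Type*} (l : Fin n → A → A) (s : Finset ι) (w : ι → A → A)
    (f : ι → A) : Prop where
  mem_closure : ∀ j ∈ s, w j ∈ AddSubmonoid.closure (Set.range l)
  injOn : Set.InjOn w s
  mem_weightSpace : ∀ j ∈ s, f j ∈ hP.weightSpace (w j)

include hx hgen in
theorem exists_isWeightDecomposition (b : A) :
    ∃ (s : Finset (AddSubmonoid.closure (Set.range l))) (f : _ → A),
      hP.IsWeightDecomposition l s (↑) f ∧ ∑ ω ∈ s, f ω = b := by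
  obtain ⟨F, hF, rfl⟩ := (Submodule.mem_iSup_iff_exists_finsupp _ b).mp
    (hP.iSup_weightSpace_eq_top hx hgen ▸ Submodule.mem_top)
  exact ⟨F.support, F, ⟨fun ω _ => ω.2, Subtype.val_injective.injOn, fun ω _ => hF ω⟩, rfl⟩

variable {hP} in
theorem IsWeightDecomposition.sum_shift {ι : Type*} [DecidableEq ι] {s : Finset ι}
    {w : ι → A → A} {f : ι → A} (h : hP.IsWeightDecomposition l s w f) (j₀ : ι) (y : A) :
    ∑ j ∈ s.erase j₀, (w j y - w j₀ y) * f j = P y (∑ j ∈ s, f j) - w j₀ y * ∑ j ∈ s, f j := by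
  rw [Finset.sum_erase _ (by rw [sub_self, zero_mul]), ← hamiltonian_apply hP, map_sum,
    Finset.mul_sum, ← Finset.sum_sub_distrib]
  refine Finset.sum_congr rfl fun j hj => ?_
  rw [hamiltonian_apply, h.mem_weightSpace j hj y, sub_mul]

variable [IsDomain A]

include hP hx hxne hgen in
theorem exists_apply_ne_of_ne {ω ω' : A → A} (hω : ω ∈ AddSubmonoid.closure (Set.range l))
    (hω' : ω' ∈ AddSubmonoid.closure (Set.range l)) (hne : ω ≠ ω') :
    ∃ i, ω (x i) ≠ ω' (x i) := by
  have hder : AddSubmonoid.closure (Set.range l) ≤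
      AddMonoidHom.mrange (Derivation.coeFnAddMonoidHom (R := k) (A := A) (M := A)) :=
    AddSubmonoid.closure_le.mpr <| by
      rintro _ ⟨i, rfl⟩
      exact ⟨hP.normalDerivation (hx i) (hxne i), rfl⟩
  obtain ⟨D, rfl⟩ := hder hω
  obtain ⟨D', rfl⟩ := hder hω'
  by_contra! h
  exact hne (congrArg _ (Derivation.ext_of_adjoin_eq_top _ hgen (by rintro _ ⟨i, rfl⟩; exact h i)))

include hx hxne hcomm in
theorem apply_mem_weightSpace {ω : A → A} (hω : ω ∈ AddSubmonoid.closure (Set.range l))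
    (i : Fin n) : ω (x i) ∈ hP.weightSpace (l i) := by
  induction hω using AddSubmonoid.closure_induction with
  | mem ω hω =>
    obtain ⟨j, rfl⟩ := hω
    exact hP.apply_mem_weightSpace_of_normal (hx i) (hx j) (hxne j) (hcomm i j)
  | zero => exact zero_mem _
  | add ω ω' _ _ h h' => exact add_mem h h'

namespace IsWeightDecomposition

variable {hP} {ι : Type*} [DecidableEq ι] {s : Finset ι} {w : ι → A → A} {f : ι → A}

include hx hxne hcomm in
theorem shift {j₀ : ι} (h : hP.IsWeightDecomposition l s w f) (hj₀ : j₀ ∈ s) (i : Fin n) :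
    hP.IsWeightDecomposition l (s.erase j₀) (fun j => l i + w j)
      (fun j => (w j (x i) - w j₀ (x i)) * f j) where
  mem_closure j hj :=
    add_mem (AddSubmonoid.subset_closure ⟨i, rfl⟩) (h.mem_closure j (Finset.mem_of_mem_erase hj))
  injOn _ ha _ hb hab :=
    h.injOn (Finset.mem_of_mem_erase ha) (Finset.mem_of_mem_erase hb) (add_left_cancel hab)
  mem_weightSpace j hj :=
    have hj := Finset.mem_of_mem_erase hj
    hP.mul_mem_weightSpace
      (sub_mem (hP.apply_mem_weightSpace hx hxne hcomm (h.mem_closure j hj) i)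
        (hP.apply_mem_weightSpace hx hxne hcomm (h.mem_closure j₀ hj₀) i))
      (h.mem_weightSpace j hj)

include hx hxne hcomm hgen in
theorem eq_zero_of_sum_eq_zero (h : hP.IsWeightDecomposition l s w f)
    (hsum : ∑ j ∈ s, f j = 0) : ∀ j ∈ s, f j = 0 := by
  induction s using Finset.strongInduction generalizing w f with
  | H s ih =>
  intro j hj
  by_cases hs : ∃ j₀ ∈ s, j₀ ≠ j
  · obtain ⟨j₀, hj₀, hne⟩ := hs
    obtain ⟨i, hi⟩ := hP.exists_apply_ne_of_ne hx hxne hgen (h.mem_closure j hj)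
      (h.mem_closure j₀ hj₀) fun heq => hne (h.injOn hj₀ hj heq.symm)
    have hsum' := h.sum_shift j₀ (x i)
    rw [hsum, hP.zero_right, mul_zero, sub_zero] at hsum'
    have := ih _ (Finset.erase_ssubset hj₀) (h.shift hx hxne hcomm hj₀ i) hsum' j
      (Finset.mem_erase.mpr ⟨hne.symm, hj⟩)
    exact (mul_eq_zero.mp this).resolve_left (sub_ne_zero.mpr hi)
  · push Not at hs
    rwa [Finset.sum_eq_single_of_mem j hj fun j' hj' hne => absurd (hs j' hj') hne] at hsum

include hx hxne hcomm hgen in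
theorem exists_ne_zero_mem_weightSpace (h : hP.IsWeightDecomposition l s w f) {I : Ideal A}
    (hI : ∀ d b, b ∈ I → P d b ∈ I) (hmem : ∑ j ∈ s, f j ∈ I) (hne : ∑ j ∈ s, f j ≠ 0) :
    ∃ ω ∈ AddSubmonoid.closure (Set.range l), ∃ c ∈ I, c ≠ 0 ∧ c ∈ hP.weightSpace ω := by
  induction s using Finset.strongInduction generalizing w f with
  | H s ih =>
  by_cases hsingle : ∃ j₀ ∈ s, ∀ j ∈ s, j ≠ j₀ → f j = 0
  · obtain ⟨j₀, hj₀, hzero⟩ := hsingle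
    rw [Finset.sum_eq_single_of_mem j₀ hj₀ hzero] at hmem hne
    exact ⟨w j₀, h.mem_closure j₀ hj₀, f j₀, hmem, hne, h.mem_weightSpace j₀ hj₀⟩
  · push Not at hsingle
    obtain ⟨j₀, hj₀⟩ := Finset.nonempty_of_sum_ne_zero hne
    obtain ⟨j₁, hj₁, hne₁, hf₁⟩ := hsingle j₀ hj₀
    obtain ⟨i, hi⟩ := hP.exists_apply_ne_of_ne hx hxne hgen (h.mem_closure j₁ hj₁)
      (h.mem_closure j₀ hj₀) fun heq => hne₁ (h.injOn hj₁ hj₀ heq)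
    have hshift := h.shift hx hxne hcomm hj₀ i
    refine ih _ (Finset.erase_ssubset hj₀) hshift ?_ ?_
    · rw [h.sum_shift j₀]
      exact sub_mem (hI _ _ hmem) (I.mul_mem_left _ hmem)
    · intro hzero
      have := hshift.eq_zero_of_sum_eq_zero hx hxne hcomm hgen hzero j₁
        (Finset.mem_erase.mpr ⟨hne₁, hj₁⟩)
      exact hf₁ ((mul_eq_zero.mp this).resolve_left (sub_ne_zero.mpr hi))

end IsWeightDecomposition

include hx hxne hcomm hgen in
theorem exists_ne_zero_mem_weightSpace_of_ne_bot {I : Ideal A} (hI : ∀ d b, b ∈ I → P d b ∈ I)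
    (hI0 : I ≠ ⊥) :
    ∃ ω ∈ AddSubmonoid.closure (Set.range l), ∃ c ∈ I, c ≠ 0 ∧ c ∈ hP.weightSpace ω := by
  classical
  obtain ⟨b, hb, hb0⟩ := Submodule.exists_mem_ne_zero_of_ne_bot hI0
  obtain ⟨s, f, hdec, rfl⟩ := hP.exists_isWeightDecomposition hx hgen b
  exact hdec.exists_ne_zero_mem_weightSpace hx hxne hcomm hgen hI hb hb0

end AffineSpace

section Casimir

variable {k A K : Type*} [CommRing k] [CommRing A] [Field K] [Algebra A K] [Algebra k K]
  {P : A → A → A} {Q : K → K → K} (hQ : IsPoissonBracket k K Q)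
  (hext : ∀ a b : A, Q (algebraMap A K a) (algebraMap A K b) = algebraMap A K (P a b))
include hQ hext

theorem bracket_mem_colon {q : K} (hq : ∀ c, Q c q = 0) {d b : A}
    (hb : b ∈ (1 : Submodule A K).colon {q}) : P d b ∈ (1 : Submodule A K).colon {q} := by
  rw [Submodule.mem_colon_singleton, Submodule.mem_one] at hb ⊢
  obtain ⟨a, ha⟩ := hb
  refine ⟨P d a, ?_⟩
  rw [← hext, ha, Algebra.smul_def, Algebra.smul_def, ← hamiltonian_apply hQ, Derivation.leibniz,
    hamiltonian_apply, hamiltonian_apply, hq, hext, smul_eq_mul, smul_eq_mul, mul_zero, zero_add,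
    mul_comm]

variable [Algebra k A] (hP : IsPoissonBracket k A P)

theorem mem_weightSpace_of_mul_casimir [IsFractionRing A K] {q : K} (hq : ∀ c, Q c q = 0)
    {ω : A → A} {a c : A} (hc : c ∈ hP.weightSpace ω)
    (hca : algebraMap A K c * q = algebraMap A K a) : a ∈ hP.weightSpace ω := fun d =>
  IsFractionRing.injective A K <| by
    rw [← hext, ← hca, ← hamiltonian_apply hQ, Derivation.leibniz, hamiltonian_apply,
      hamiltonian_apply, hq, hext, hc d, map_mul, map_mul, smul_eq_mul, smul_eq_mul]
    linear_combination algebraMap A K (ω d) * hca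

theorem casimir_of_mem_weightSpace [IsFractionRing A K] {ω : A → A} {a b : A}
    (ha : a ∈ hP.weightSpace ω) (hb : b ∈ hP.weightSpace ω) (c : K) :
    Q c (algebraMap A K a * (algebraMap A K b)⁻¹) = 0 := by
  refine hQ.eq_zero_of_forall_algebraMap_left (A := A) (fun d => ?_) c
  rw [← div_eq_mul_inv, ← hamiltonian_apply hQ, Derivation.leibniz_div]
  simp only [hamiltonian_apply, hext, ha d, hb d, map_mul, smul_eq_mul]
  ring

end Casimir

end IsPoissonBracket

theorem casimirs_are_quotients_of_homogeneous_general
    {k A K : Type*} [Field k] [CommRing A] [IsDomain A] [Algebra k A]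
    [Field K] [Algebra A K] [IsFractionRing A K] [Algebra k K]
    (P : A → A → A) (hP : IsPoissonBracket k A P)
    (n : ℕ) (x : Fin n → A) (l : Fin n → A → A)
    (hgen : Algebra.adjoin k (Set.range x) = ⊤)
    (hx : ∀ (i : Fin n) (b : A), P b (x i) = l i b * x i)
    (hxne : ∀ i : Fin n, x i ≠ 0)
    (hcomm : ∀ (i j : Fin n) (a : A), l i (l j a) = l j (l i a))
    (Q : K → K → K) (hQ : IsPoissonBracket k K Q)
    (hext : ∀ a b : A, Q (algebraMap A K a) (algebraMap A K b) = algebraMap A K (P a b)) :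
    ∀ q : K, (∀ c : K, Q c q = 0) ↔
      ∃ (cf : Fin n → ℕ) (a b : A), b ≠ 0 ∧
        (∀ d : A, P d a = (∑ i : Fin n, cf i • l i d) * a) ∧
        (∀ d : A, P d b = (∑ i : Fin n, cf i • l i d) * b) ∧
        q = algebraMap A K a * (algebraMap A K b)⁻¹ := by
  intro q
  constructor
  · intro hq
    obtain ⟨ω, hω, c, hc, hc0, hcω⟩ := hP.exists_ne_zero_mem_weightSpace_of_ne_bot hx hxne hcomm
      hgen (fun _ _ => hQ.bracket_mem_colon hext hq) (Submodule.colon_one_singleton_ne_bot q)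
    obtain ⟨a, ha⟩ := Submodule.mem_one.mp (Submodule.mem_colon_singleton.mp hc)
    rw [Algebra.smul_def] at ha
    obtain ⟨cf, rfl⟩ := AddSubmonoid.exists_eq_sum_apply_of_mem_closure_range hω
    refine ⟨cf, a, c, hc0, hQ.mem_weightSpace_of_mul_casimir hext hP hq hcω ha.symm, hcω, ?_⟩
    rw [eq_mul_inv_iff_mul_eq₀ ((map_ne_zero_iff _ (IsFractionRing.injective A K)).mpr hc0), ha,
      mul_comm]
  · rintro ⟨cf, a, b, -, ha, hb, rfl⟩
    exact hQ.casimir_of_mem_weightSpace hext hP ha hb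

/-- In a generalised Poisson affine space `A`, the Casimirs of `Frac(A)` are exactly the
quotients `a·b⁻¹` of two homogeneous elements of `A` of the same weight. -/
theorem casimirs_are_quotients_of_homogeneous
    {k A K : Type*} [Field k] [CharZero k] [CommRing A] [IsDomain A] [Algebra k A]
    [Field K] [Algebra A K] [IsFractionRing A K] [Algebra k K] [IsScalarTower k A K]
    (P : A → A → A) (hP : IsPoissonBracket k A P)
    (n : ℕ) (x : Fin n → A) (l : Fin n → A → A)
    (hgen : Algebra.adjoin k (Set.range x) = ⊤)
    (hx : ∀ (i : Fin n) (b : A), P b (x i) = l i b * x i)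
    (hxne : ∀ i : Fin n, x i ≠ 0)
    (hcomm : ∀ (i j : Fin n) (a : A), l i (l j a) = l j (l i a))
    (Q : K → K → K) (hQ : IsPoissonBracket k K Q)
    (hext : ∀ a b : A, Q (algebraMap A K a) (algebraMap A K b) = algebraMap A K (P a b)) :
    ∀ q : K, (∀ c : K, Q c q = 0) ↔
      ∃ (cf : Fin n → ℕ) (a b : A), b ≠ 0 ∧
        (∀ d : A, P d a = (∑ i : Fin n, cf i • l i d) * a) ∧
        (∀ d : A, P d b = (∑ i : Fin n, cf i • l i d) * b) ∧
        q = algebraMap A K a * (algebraMap A K b)⁻¹ :=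
  casimirs_are_quotients_of_homogeneous_general P hP n x l hgen hx hxne hcomm Q hQ hext
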